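/- arXiv:1506.04250 — 8 statements merged into one kernel-verified Lean document; each statement's English description precedes it below -/
import Mathlib

section
/- Let (Ω, μ) be a probability measure space and let p > 1 be a real number. Let f : Ω → ℝ be a nonnegative function with f ∈ L^p(μ) ∩ L^1(μ) and ∫_Ω f dμ > 0. Then (1/(p−1)) · ( (∫_Ω f^p dμ) / (∫_Ω f dμ)^p − 1 ) ≥ (1/2) · ( ∫_Ω | f/(∫_Ω f dμ) − 1 | dμ )². -/
/-!
For `p ≥ 1` the integrand `t ^ p - 1 - p (t - 1)` dominates `p - 1` times the Kullback–Leibler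
integrand `klFun t = t log t + 1 - t` (multiply `t ^ (p - 1) ≥ 1 + (p - 1) log t` by `t`), and
`2 (t + 2) klFun t ≥ 3 (t - 1) ^ 2`, the pointwise inequality behind Pinsker's inequality.
For a density `g` with `∫ g = 1`, Cauchy–Schwarz against the weight `g + 2`, whose integral
is `3`, turns `(g - 1) ^ 2 ≤ (g + 2) Φ` into `(∫ |g - 1|) ^ 2 ≤ 3 ∫ Φ`. Normalizing `f` by its
mean gives the theorem.
-/

open MeasureTheory Real
open Set InformationTheory

lemma two_mul_sub_one_div_add_one_le_log {t : ℝ} (ht : 1 ≤ t) :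
    2 * (t - 1) / (t + 1) ≤ log t := by
  have h := le_log_one_add_of_nonneg (sub_nonneg.2 ht)
  rwa [add_sub_cancel, show t - 1 + 2 = t + 1 by ring] at h

lemma log_le_two_mul_sub_one_div_add_one {t : ℝ} (h0 : 0 < t) (h1 : t ≤ 1) :
    log t ≤ 2 * (t - 1) / (t + 1) := by
  have h := two_mul_sub_one_div_add_one_le_log (one_le_one_div h0 h1)
  rw [log_div one_ne_zero h0.ne', log_one,
    show 2 * (1 / t - 1) / (1 / t + 1) = -(2 * (t - 1) / (t + 1)) by field_simp; ring] at h
  linarith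

lemma three_mul_sub_one_sq_le_klFun {t : ℝ} (ht : 0 ≤ t) :
    3 * (t - 1) ^ 2 ≤ 2 * (t + 2) * klFun t := by
  set q : ℝ → ℝ := fun t => 2 * (t + 2) * klFun t - 3 * (t - 1) ^ 2
  have hq : ∀ s > 0, HasDerivAt q (4 * ((s + 1) * log s - 2 * (s - 1))) s := by
    intro s hs
    refine ((((hasDerivAt_id s).add_const 2).const_mul 2).mul (hasDerivAt_klFun hs.ne')
      |>.sub ((((hasDerivAt_id s).sub_const 1).pow 2).const_mul 3)).congr_deriv ?_
    simp only [id, klFun_apply]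
    ring
  have hmin : IsMinOn q (Ioi 0) 1 := by
    refine isMinOn_Ioi_of_deriv (hq 1 one_pos).continuousAt
      (fun x hx => (hq x hx.1).differentiableAt.differentiableWithinAt)
      (fun x hx => (hq x (one_pos.trans hx)).differentiableAt.differentiableWithinAt)
      (fun x hx => ?_) (fun x hx => ?_)
    · rw [(hq x hx.1).deriv]
      have := log_le_two_mul_sub_one_div_add_one hx.1 hx.2.le
      rw [le_div_iff₀ (by linarith [hx.1])] at this
      linarith
    · rw [(hq x (one_pos.trans hx)).deriv]
      have := two_mul_sub_one_div_add_one_le_log (le_of_lt hx)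
      rw [div_le_iff₀ (by linarith [mem_Ioi.1 hx])] at this
      linarith
  rcases ht.eq_or_lt with rfl | ht
  · norm_num [klFun_zero]
  · have := isMinOn_iff.1 hmin t ht
    norm_num [q, klFun_one] at this
    linarith

lemma sub_one_mul_klFun_le_rpow {t : ℝ} (ht : 0 ≤ t) (p : ℝ) :
    (p - 1) * klFun t ≤ t ^ p - 1 - p * (t - 1) := by
  rcases ht.eq_or_lt with rfl | ht
  · simp only [klFun_zero]
    linarith [rpow_nonneg (le_refl (0 : ℝ)) p]
  · have hexp : log t * (p - 1) + 1 ≤ t ^ (p - 1) := by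
      rw [rpow_def_of_pos ht]
      exact add_one_le_exp _
    have hpow : t ^ p = t * t ^ (p - 1) := by
      rw [rpow_sub_one ht.ne']
      field_simp
    rw [hpow, klFun_apply]
    nlinarith [mul_le_mul_of_nonneg_left hexp ht.le]

lemma three_mul_sub_one_mul_sub_one_sq_le_rpow {t p : ℝ} (ht : 0 ≤ t) (hp : 1 ≤ p) :
    3 * (p - 1) * (t - 1) ^ 2 ≤ 2 * (t + 2) * (t ^ p - 1 - p * (t - 1)) :=
  calc 3 * (p - 1) * (t - 1) ^ 2 = (p - 1) * (3 * (t - 1) ^ 2) := by ring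
    _ ≤ (p - 1) * (2 * (t + 2) * klFun t) :=
      mul_le_mul_of_nonneg_left (three_mul_sub_one_sq_le_klFun ht) (by linarith)
    _ = 2 * (t + 2) * ((p - 1) * klFun t) := by ring
    _ ≤ 2 * (t + 2) * (t ^ p - 1 - p * (t - 1)) :=
      mul_le_mul_of_nonneg_left (sub_one_mul_klFun_le_rpow ht p) (by linarith)

section Density

variable {Ω : Type*} [MeasurableSpace Ω] {μ : Measure Ω} [IsProbabilityMeasure μ] {g : Ω → ℝ}

lemma sq_integral_abs_sub_one_le_three_mul_integral {Φ : Ω → ℝ} (hg0 : ∀ x, 0 ≤ g x)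
    (hg : Integrable g μ) (hg1 : ∫ x, g x ∂μ = 1) (hΦ : Integrable Φ μ)
    (hgΦ : ∀ x, (g x - 1) ^ 2 ≤ (g x + 2) * Φ x) :
    (∫ x, |g x - 1| ∂μ) ^ 2 ≤ 3 * ∫ x, Φ x ∂μ := by
  set T := ∫ x, |g x - 1| ∂μ
  -- Cauchy–Schwarz in AM-GM form, with the optimal weight `l`
  set l := T / 3 with hl
  have hpt : ∀ x, 2 * l * |g x - 1| ≤ Φ x + l ^ 2 * (g x + 2) := by
    intro x
    have h2 : 0 < g x + 2 := by linarith [hg0 x]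
    refine le_of_mul_le_mul_left ?_ h2
    nlinarith [sq_nonneg (|g x - 1| - l * (g x + 2)), sq_abs (g x - 1), hgΦ x]
  have hg2 : Integrable (fun x => g x + 2) μ := hg.add (integrable_const 2)
  have hint : ∫ x, 2 * l * |g x - 1| ∂μ ≤ ∫ x, Φ x + l ^ 2 * (g x + 2) ∂μ :=
    integral_mono ((hg.sub (integrable_const 1)).abs.const_mul (2 * l))
      (hΦ.add (hg2.const_mul (l ^ 2))) hpt
  rw [integral_const_mul, integral_add hΦ (hg2.const_mul _),
    integral_const_mul, integral_add hg (integrable_const 2), hg1] at hint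
  simp only [integral_const, probReal_univ, smul_eq_mul, one_mul] at hint
  change 2 * l * T ≤ _ + l ^ 2 * (1 + 2) at hint
  rw [hl] at hint
  linarith

lemma integral_rpow_sub_one_sub_mul {p : ℝ} (hgp : Integrable (fun x => g x ^ p) μ)
    (hg : Integrable g μ) (hg1 : ∫ x, g x ∂μ = 1) :
    ∫ x, (g x ^ p - 1 - p * (g x - 1)) ∂μ = (∫ x, g x ^ p ∂μ) - 1 := by
  have hgp1 : Integrable (fun x => g x ^ p - 1) μ := hgp.sub (integrable_const 1)
  have hg1' : Integrable (fun x => g x - 1) μ := hg.sub (integrable_const 1)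
  rw [integral_sub hgp1 (hg1'.const_mul p), integral_sub hgp (integrable_const 1),
    integral_const_mul, integral_sub hg (integrable_const 1), hg1]
  simp

lemma sq_integral_abs_sub_one_le_integral_rpow {p : ℝ} (hp : 1 < p) (hg0 : ∀ x, 0 ≤ g x)
    (hgp : Integrable (fun x => g x ^ p) μ) (hg : Integrable g μ) (hg1 : ∫ x, g x ∂μ = 1) :
    1 / 2 * (∫ x, |g x - 1| ∂μ) ^ 2 ≤ 1 / (p - 1) * ((∫ x, g x ^ p ∂μ) - 1) := by
  have hp1 : 0 < p - 1 := sub_pos.2 hp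
  set c := 2 / (3 * (p - 1))
  have hφ : Integrable (fun x => g x ^ p - 1 - p * (g x - 1)) μ :=
    (hgp.sub (integrable_const 1)).sub ((hg.sub (integrable_const 1)).const_mul p)
  have key := sq_integral_abs_sub_one_le_three_mul_integral hg0 hg hg1 (hφ.const_mul c)
    fun x => by
      rw [show (g x + 2) * (c * (g x ^ p - 1 - p * (g x - 1)))
          = 2 * (g x + 2) * (g x ^ p - 1 - p * (g x - 1)) / (3 * (p - 1)) by simp only [c]; ring,
        le_div_iff₀ (by positivity)]
      linarith [three_mul_sub_one_mul_sub_one_sq_le_rpow (hg0 x) hp.le]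
  rw [integral_const_mul, integral_rpow_sub_one_sub_mul hgp hg hg1] at key
  calc 1 / 2 * (∫ x, |g x - 1| ∂μ) ^ 2 ≤ 1 / 2 * (3 * (c * ((∫ x, g x ^ p ∂μ) - 1))) := by
        gcongr
    _ = 1 / (p - 1) * ((∫ x, g x ^ p ∂μ) - 1) := by simp only [c]; field_simp

end Density

theorem stmt_0 {Ω : Type*} [MeasurableSpace Ω] (μ : Measure Ω) [IsProbabilityMeasure μ]
    (p : ℝ) (hp : 1 < p) (f : Ω → ℝ) (hf0 : ∀ x, 0 ≤ f x)
    (hfp : Integrable (fun x => f x ^ p) μ) (hf1 : Integrable f μ)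
    (hpos : 0 < ∫ x, f x ∂μ) :
    (1 / (p - 1)) * ((∫ x, f x ^ p ∂μ) / (∫ x, f x ∂μ) ^ p - 1) ≥
      (1 / 2) * (∫ x, |f x / (∫ y, f y ∂μ) - 1| ∂μ) ^ 2 := by
  set I := ∫ x, f x ∂μ
  have hgp : ∀ x, (f x / I) ^ p = f x ^ p / I ^ p := fun x => div_rpow (hf0 x) hpos.le p
  have key := sq_integral_abs_sub_one_le_integral_rpow (μ := μ) hp
    (fun x => div_nonneg (hf0 x) hpos.le) (by simpa only [hgp] using hfp.div_const (I ^ p))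
    (hf1.div_const I) (by rw [integral_div, div_self hpos.ne'])
  simpa only [hgp, integral_div] using key
end

section
/- Let (Ω, μ) be a probability measure space and let 0 < p < 1 be a real number. Let f : Ω → ℝ be a nonnegative function with f ∈ L^p(μ) ∩ L^1(μ) and ∫_Ω f dμ > 0. Then (1/(p−1)) · ( (∫_Ω f^p dμ) / (∫_Ω f dμ)^p − 1 ) ≥ ((p+1)^{p+1}/(8 p^{p−1})) · ( ∫_Ω | f/(∫_Ω f dμ) − 1 | dμ )². -/
/-!
Normalise to `g = f / ∫ f`, so that `∫ g = 1` and the left-hand side becomes `∫ φ(g) / (1 - p)`,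
where `φ(x) = 1 + p (x - 1) - x ^ p ≥ 0` is the gap in Bernoulli's inequality. The function
`(x + 2) φ(x) - (3/4) p (1 - p) (1 + p) (x - 1) ^ 2` is convex on `[0, ∞)` with a critical point
at `1`, which gives `φ(x) ≥ (p (1 - p) (1 + p) / 4) · (x - 1) ^ 2 / ((x + 2) / 3)`. Cauchy–Schwarz
against the weight `(g + 2) / 3`, whose integral is `1`, bounds `(∫ |g - 1|) ^ 2` by the integral
of the right-hand side. Finally `c_p ≤ p (p + 1) / 4` because `(1 + 1/p) ^ p ≤ 2`.
-/

open MeasureTheory Real Set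

lemma rpow_le_one_sub_add_mul {u q : ℝ} (hu : 0 ≤ u) (hq0 : 0 ≤ q) (hq1 : q ≤ 1) :
    u ^ q ≤ 1 - q + q * u := by
  have := rpow_one_add_le_one_add_mul_self (s := u - 1) (by linarith) hq0 hq1
  rw [add_sub_cancel] at this
  linarith

lemma rpow_mul_one_add_sub_le_one {u q : ℝ} (hu : 0 ≤ u) (hq0 : 0 ≤ q) (hq1 : q ≤ 1) :
    u ^ q * (1 + q - q * u) ≤ 1 := by
  rcases le_or_gt (1 + q - q * u) 0 with hneg | hpos
  · nlinarith [rpow_nonneg hu q]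
  calc u ^ q * (1 + q - q * u) ≤ (1 - q + q * u) * (1 + q - q * u) :=
        mul_le_mul_of_nonneg_right (rpow_le_one_sub_add_mul hu hq0 hq1) hpos.le
    _ ≤ 1 := by nlinarith [sq_nonneg (q - q * u)]

lemma rpow_mul_sub_le {s q : ℝ} (hs : 0 ≤ s) (hq0 : 0 ≤ q) (hq1 : q ≤ 1) :
    s ^ q * ((2 - q) - 2 * q * s) ≤ 2 - 3 * q + 3 / 2 * q ^ 2 := by
  -- the left side is maximal at `s = t`; write `s = t * u`
  set t := (2 - q) / (2 * (q + 1)) with ht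
  have htpos : 0 < t := div_pos (by linarith) (by linarith)
  obtain ⟨u, hu, rfl⟩ : ∃ u, 0 ≤ u ∧ s = t * u :=
    ⟨s / t, div_nonneg hs htpos.le, by field_simp⟩
  calc (t * u) ^ q * ((2 - q) - 2 * q * (t * u))
      = t ^ q * ((2 - q) / (q + 1)) * (u ^ q * (1 + q - q * u)) := by
        rw [mul_rpow htpos.le hu, ht]
        field_simp
        ring
    _ ≤ t ^ q * ((2 - q) / (q + 1)) :=
        mul_le_of_le_one_right
          (mul_nonneg (rpow_nonneg htpos.le q) (div_nonneg (by linarith) (by linarith)))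
          (rpow_mul_one_add_sub_le_one hu hq0 hq1)
    _ ≤ (1 - q + q * t) * ((2 - q) / (q + 1)) := by
      gcongr
      · exact div_nonneg (by linarith) (by linarith)
      · exact rpow_le_one_sub_add_mul htpos.le hq0 hq1
    _ ≤ 2 - 3 * q + 3 / 2 * q ^ 2 := by
      have hq : 0 ≤ 1 - q + q ^ 2 := by nlinarith
      have : (2 - 3 * q + 3 / 2 * q ^ 2) - (1 - q + q * t) * ((2 - q) / (q + 1))
          = 3 * q ^ 2 * (1 - q + q ^ 2) / (2 * (q + 1) ^ 2) := by
        rw [ht]; field_simp; ring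
      have : 0 ≤ 3 * q ^ 2 * (1 - q + q ^ 2) / (2 * (q + 1) ^ 2) := by positivity
      linarith

noncomputable def bernoulliGap (p x : ℝ) : ℝ := 1 + p * (x - 1) - x ^ p

lemma hasDerivAt_bernoulliGap (p : ℝ) {x : ℝ} (hx : 0 < x) :
    HasDerivAt (bernoulliGap p) (p - p * x ^ (p - 1)) x :=
  ((((hasDerivAt_id x).sub_const 1).const_mul p).const_add 1 |>.sub
    (hasDerivAt_rpow_const (Or.inl hx.ne'))).congr_deriv (by simp)

lemma hasDerivAt_sub_mul_rpow_sub_one (p : ℝ) {x : ℝ} (hx : 0 < x) :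
    HasDerivAt (fun x => p - p * x ^ (p - 1)) (p * (1 - p) * x ^ (p - 2)) x := by
  have h := ((hasDerivAt_rpow_const (p := p - 1) (Or.inl hx.ne')).const_mul p).const_sub p
  rw [show p - 1 - 1 = p - 2 by ring] at h
  exact h.congr_deriv (by ring)

lemma le_deriv2_add_two_mul_bernoulliGap {p x : ℝ} (hp0 : 0 < p) (hp1 : p < 1) (hx : 0 < x) :
    3 / 2 * p * (1 - p) * (1 + p)
      ≤ 2 * (p - p * x ^ (p - 1)) + (x + 2) * (p * (1 - p) * x ^ (p - 2)) := by
  have h1 : x ^ (p - 1) = x⁻¹ ^ (1 - p) := by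
    rw [inv_rpow hx.le, ← rpow_neg hx.le, neg_sub]
  have h2 : x ^ (p - 2) = x⁻¹ ^ (1 - p) * x⁻¹ := by
    rw [show p - 2 = (p - 1) + (-1) by ring, rpow_add hx, h1, rpow_neg_one]
  have hs := rpow_mul_sub_le (inv_nonneg.2 hx.le) (sub_nonneg.2 hp1.le) (by linarith : 1 - p ≤ 1)
  have hxinv : x * x⁻¹ = 1 := mul_inv_cancel₀ hx.ne'
  have key : 2 * (p - p * x ^ (p - 1)) + (x + 2) * (p * (1 - p) * x ^ (p - 2))
      - 3 / 2 * p * (1 - p) * (1 + p) = p * ((2 - 3 * (1 - p) + 3 / 2 * (1 - p) ^ 2)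
        - x⁻¹ ^ (1 - p) * (2 - (1 - p) - 2 * (1 - p) * x⁻¹)) := by
    rw [h1, h2]
    linear_combination (p * (1 - p) * x⁻¹ ^ (1 - p)) * hxinv
  linarith [mul_nonneg hp0.le (sub_nonneg.2 hs)]

lemma mul_sq_sub_one_le_add_two_mul_bernoulliGap {p x : ℝ} (hp0 : 0 < p) (hp1 : p < 1)
    (hx : 0 ≤ x) :
    3 / 4 * p * (1 - p) * (1 + p) * (x - 1) ^ 2 ≤ (x + 2) * bernoulliGap p x := by
  set K := 3 / 4 * p * (1 - p) * (1 + p)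
  set G : ℝ → ℝ := fun x => (x + 2) * bernoulliGap p x - K * (x - 1) ^ 2 with hG
  set G' : ℝ → ℝ := fun x =>
    bernoulliGap p x + (x + 2) * (p - p * x ^ (p - 1)) - 2 * K * (x - 1) with hG'
  set G'' : ℝ → ℝ := fun x =>
    2 * (p - p * x ^ (p - 1)) + (x + 2) * (p * (1 - p) * x ^ (p - 2)) - 2 * K with hG''
  have hG_deriv : ∀ x, 0 < x → HasDerivAt G (G' x) x := fun x hx =>
    ((((hasDerivAt_id x).add_const 2).mul (hasDerivAt_bernoulliGap p hx)).sub
      ((((hasDerivAt_id x).sub_const 1).pow 2).const_mul K)).congr_deriv (by simp [hG']; ring)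
  have hG'_deriv : ∀ x, 0 < x → HasDerivAt G' (G'' x) x := fun x hx =>
    (((hasDerivAt_bernoulliGap p hx).add
      (((hasDerivAt_id x).add_const 2).mul (hasDerivAt_sub_mul_rpow_sub_one p hx))).sub
      (((hasDerivAt_id x).sub_const 1).const_mul (2 * K))).congr_deriv (by simp [hG'']; ring)
  have hconvex : ConvexOn ℝ (Ici 0) G := by
    refine convexOn_of_hasDerivWithinAt2_nonneg (f' := G') (f'' := G'') (convex_Ici 0) ?_ ?_ ?_ ?_
    · have := continuous_rpow_const hp0.le
      simp only [hG, bernoulliGap]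
      fun_prop
    all_goals simp only [interior_Ici]
    · exact fun x hx => (hG_deriv x hx).hasDerivWithinAt
    · exact fun x hx => (hG'_deriv x hx).hasDerivWithinAt
    · intro x hx
      simp only [hG'', K]
      linarith [le_deriv2_add_two_mul_bernoulliGap hp0 hp1 hx]
  have hmin : IsMinOn G (Ici 0) 1 := by
    refine hconvex.isMinOn_of_rightDeriv_eq_zero (by simp) ?_
    rw [((hG_deriv 1 one_pos).hasDerivWithinAt).derivWithin (uniqueDiffWithinAt_Ioi 1)]
    simp [hG', bernoulliGap]
  simpa [hG, bernoulliGap] using hmin (mem_Ici.2 hx)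

theorem sq_integral_abs_le_integral_sq_div_mul_integral {Ω : Type*} [MeasurableSpace Ω]
    {μ : Measure Ω} {h w : Ω → ℝ} (hw : ∀ x, 0 < w x) (hh : Integrable h μ)
    (hw_int : Integrable w μ) (hhw : Integrable (fun x => h x ^ 2 / w x) μ) :
    (∫ x, |h x| ∂μ) ^ 2 ≤ (∫ x, h x ^ 2 / w x ∂μ) * ∫ x, w x ∂μ := by
  have hquad : ∀ m : ℝ, 0 ≤ (∫ x, w x ∂μ) * (m * m) + (-2 * ∫ x, |h x| ∂μ) * m
      + ∫ x, h x ^ 2 / w x ∂μ := fun m => by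
    have hsq : ∀ x, (|h x| - m * w x) ^ 2 / w x = h x ^ 2 / w x - 2 * m * |h x| + m ^ 2 * w x :=
      fun x => by
        have := (hw x).ne'
        field_simp
        rw [← sq_abs (h x)]
        ring
    have : 0 ≤ ∫ x, (|h x| - m * w x) ^ 2 / w x ∂μ :=
      integral_nonneg fun x => div_nonneg (sq_nonneg _) (hw x).le
    simp only [hsq] at this
    have hdiff : Integrable (fun x => h x ^ 2 / w x - 2 * m * |h x|) μ :=
      hhw.sub (hh.abs.const_mul _)
    rw [integral_add hdiff (hw_int.const_mul _), integral_sub hhw (hh.abs.const_mul _),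
      integral_const_mul, integral_const_mul] at this
    linarith
  have := discrim_le_zero hquad
  rw [discrim] at this
  nlinarith

theorem integrable_bernoulliGap {Ω : Type*} [MeasurableSpace Ω] {μ : Measure Ω}
    [IsFiniteMeasure μ] {p : ℝ} {g : Ω → ℝ} (hg : Integrable g μ)
    (hgp : Integrable (fun x => g x ^ p) μ) :
    Integrable (fun x => bernoulliGap p (g x)) μ :=
  ((integrable_const 1).add ((hg.sub (integrable_const 1)).const_mul p)).sub hgp

theorem integral_bernoulliGap {Ω : Type*} [MeasurableSpace Ω] {μ : Measure Ω}
    [IsProbabilityMeasure μ] {p : ℝ} {g : Ω → ℝ} (hg : Integrable g μ)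
    (hgp : Integrable (fun x => g x ^ p) μ) (hg1 : ∫ x, g x ∂μ = 1) :
    ∫ x, bernoulliGap p (g x) ∂μ = 1 - ∫ x, g x ^ p ∂μ := by
  have hlin : Integrable (fun x => p * (g x - 1)) μ := (hg.sub (integrable_const 1)).const_mul p
  have haff : Integrable (fun x => 1 + p * (g x - 1)) μ := (integrable_const 1).add hlin
  simp only [bernoulliGap]
  rw [integral_sub haff hgp, integral_add (integrable_const 1) hlin,
    integral_const_mul, integral_sub hg (integrable_const 1), hg1]
  simp

theorem mul_sq_integral_abs_sub_one_le {Ω : Type*} [MeasurableSpace Ω] {μ : Measure Ω}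
    [IsProbabilityMeasure μ] {p : ℝ} (hp0 : 0 < p) (hp1 : p < 1) {g : Ω → ℝ}
    (hg0 : ∀ x, 0 ≤ g x) (hg : Integrable g μ) (hgp : Integrable (fun x => g x ^ p) μ)
    (hg1 : ∫ x, g x ∂μ = 1) :
    p * (1 - p) * (1 + p) / 4 * (∫ x, |g x - 1| ∂μ) ^ 2 ≤ 1 - ∫ x, g x ^ p ∂μ := by
  set K := p * (1 - p) * (1 + p) / 4
  have hK : 0 < K := by
    have : 0 < 1 - p := by linarith
    positivity
  have hw : ∀ x, 0 < (g x + 2) / 3 := fun x => by linarith [hg0 x]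
  have hbound : ∀ x, K * ((g x - 1) ^ 2 / ((g x + 2) / 3)) ≤ bernoulliGap p (g x) := fun x => by
    have := mul_sq_sub_one_le_add_two_mul_bernoulliGap hp0 hp1 (hg0 x)
    rw [← mul_div_assoc, div_le_iff₀ (hw x)]
    simp only [K]
    linarith
  have hgap := integrable_bernoulliGap hg hgp
  have hratio : Integrable (fun x => (g x - 1) ^ 2 / ((g x + 2) / 3)) μ := by
    refine (hgap.div_const K).mono' ?_ (Filter.Eventually.of_forall fun x => ?_)
    · have := hg.aemeasurable
      exact (by fun_prop : AEMeasurable _ μ).aestronglyMeasurable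
    · rw [norm_of_nonneg (div_nonneg (sq_nonneg _) (hw x).le), le_div_iff₀ hK, mul_comm]
      exact hbound x
  have hw1 : ∫ x, (g x + 2) / 3 ∂μ = 1 := by
    rw [integral_div, integral_add hg (integrable_const 2), hg1]
    norm_num
  calc K * (∫ x, |g x - 1| ∂μ) ^ 2
      ≤ K * ∫ x, (g x - 1) ^ 2 / ((g x + 2) / 3) ∂μ := by
        have := sq_integral_abs_le_integral_sq_div_mul_integral hw (hg.sub (integrable_const 1))
          ((hg.add (integrable_const 2)).div_const 3) hratio
        rw [hw1, mul_one] at this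
        exact mul_le_mul_of_nonneg_left this hK.le
    _ = ∫ x, K * ((g x - 1) ^ 2 / ((g x + 2) / 3)) ∂μ := (integral_const_mul _ _).symm
    _ ≤ ∫ x, bernoulliGap p (g x) ∂μ := integral_mono (hratio.const_mul _) hgap hbound
    _ = 1 - ∫ x, g x ^ p ∂μ := integral_bernoulliGap hg hgp hg1

lemma one_add_inv_rpow_le_two {p : ℝ} (hp0 : 0 < p) (hp1 : p ≤ 1) : (1 + p⁻¹) ^ p ≤ 2 := by
  have := rpow_le_one_sub_add_mul (u := 1 + p⁻¹) (by positivity) hp0.le hp1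
  rw [mul_add, mul_one, mul_inv_cancel₀ hp0.ne'] at this
  linarith

lemma add_one_rpow_add_one_div_le {p : ℝ} (hp0 : 0 < p) (hp1 : p ≤ 1) :
    (p + 1) ^ (p + 1) / (8 * p ^ (p - 1)) ≤ p * (p + 1) / 4 := by
  have hp : (p + 1) ^ (p + 1) / (8 * p ^ (p - 1)) = p * (p + 1) * (1 + p⁻¹) ^ p / 8 := by
    rw [rpow_add (by linarith), rpow_sub hp0, rpow_one, rpow_one,
      show 1 + p⁻¹ = (p + 1) / p by field_simp, div_rpow (by linarith) hp0.le]
    field_simp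
  rw [hp]
  have := one_add_inv_rpow_le_two hp0 hp1
  have : 0 ≤ p * (p + 1) := by positivity
  nlinarith

theorem stmt_1 {Ω : Type*} [MeasurableSpace Ω] (μ : Measure Ω) [IsProbabilityMeasure μ]
    (p : ℝ) (hp0 : 0 < p) (hp1 : p < 1) (f : Ω → ℝ) (hf0 : ∀ x, 0 ≤ f x)
    (hfp : Integrable (fun x => f x ^ p) μ) (hf1 : Integrable f μ)
    (hpos : 0 < ∫ x, f x ∂μ) :
    (1 / (p - 1)) * ((∫ x, f x ^ p ∂μ) / (∫ x, f x ∂μ) ^ p - 1) ≥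
      ((p + 1) ^ (p + 1) / (8 * p ^ (p - 1))) *
        (∫ x, |f x / (∫ y, f y ∂μ) - 1| ∂μ) ^ 2 := by
  set I := ∫ x, f x ∂μ
  have hgp : (fun x => (f x / I) ^ p) = fun x => f x ^ p / I ^ p :=
    funext fun x => div_rpow (hf0 x) hpos.le p
  have hg1 : ∫ x, f x / I ∂μ = 1 := by rw [integral_div, div_self hpos.ne']
  have key := mul_sq_integral_abs_sub_one_le hp0 hp1 (fun x => div_nonneg (hf0 x) hpos.le)
    (hf1.div_const I) (by rw [hgp]; exact hfp.div_const _) hg1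
  rw [hgp, integral_div] at key
  have hconst := add_one_rpow_add_one_div_le hp0 hp1.le
  have hq : 0 < 1 - p := by linarith
  have hq' : p - 1 ≠ 0 := by linarith
  rw [ge_iff_le, show 1 / (p - 1) * ((∫ x, f x ^ p ∂μ) / I ^ p - 1)
      = (1 - (∫ x, f x ^ p ∂μ) / I ^ p) / (1 - p) by field_simp; ring, le_div_iff₀ hq]
  calc (p + 1) ^ (p + 1) / (8 * p ^ (p - 1)) * (∫ x, |f x / I - 1| ∂μ) ^ 2 * (1 - p)
      ≤ p * (p + 1) / 4 * (∫ x, |f x / I - 1| ∂μ) ^ 2 * (1 - p) := by gcongr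
    _ = p * (1 - p) * (1 + p) / 4 * (∫ x, |f x / I - 1| ∂μ) ^ 2 := by ring
    _ ≤ _ := key
end

section
/- Let (Ω, μ) be a probability measure space and let f : Ω → ℝ be a nonnegative function with ∫_Ω f dμ = 1 and such that f · log f is μ-integrable. Then ∫_Ω f log f dμ ≥ (1/2) · ( ∫_Ω | f − 1 | dμ )². -/
open MeasureTheory Real

/-!
Pointwise, `3 (t - 1)² ≤ 2 (t + 2) (t log t - t + 1)` for `t ≥ 0`: both sides agree at `t = 1`,
and the derivative of their difference is `4 ((t + 1) log t - 2 (t - 1))`, which has the sign of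
`t - 1`. With `w = f log f - f + 1` and `v = 2 (f + 2) / 3` this reads `|f - 1|² ≤ w v`, so by
Cauchy–Schwarz `(∫ |f - 1|)² ≤ ∫ w · ∫ v = 2 ∫ f log f`.
-/

open Set in
theorem isMinOn_Ici_of_sub_mul_deriv_nonneg {f f' : ℝ → ℝ} {a b : ℝ} (hab : a ≤ b)
    (hf : ContinuousOn f (Ici a)) (hf' : ∀ x ∈ Ioi a, HasDerivAt f (f' x) x)
    (hsign : ∀ x ∈ Ioi a, 0 ≤ (x - b) * f' x) : IsMinOn f (Ici a) b := by
  intro t (ht : a ≤ t)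
  rcases le_total t b with htb | hbt
  · refine antitoneOn_of_hasDerivWithinAt_nonpos (convex_Icc a b) (hf.mono Icc_subset_Ici_self)
      (fun x hx ↦ (hf' x ?_).hasDerivWithinAt) (fun x hx ↦ ?_) ⟨ht, htb⟩ ⟨hab, le_rfl⟩ htb
    all_goals rw [interior_Icc] at hx
    · exact hx.1
    · exact nonpos_of_mul_nonneg_right (hsign x hx.1) (sub_neg.2 hx.2)
  · refine monotoneOn_of_hasDerivWithinAt_nonneg (convex_Ici b) (hf.mono (Ici_subset_Ici.2 hab))
      (fun x hx ↦ (hf' x ?_).hasDerivWithinAt) (fun x hx ↦ ?_) self_mem_Ici hbt hbt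
    all_goals rw [interior_Ici] at hx
    · exact hab.trans_lt hx
    · exact nonneg_of_mul_nonneg_right (hsign x (hab.trans_lt hx)) (sub_pos.2 hx)

theorem sub_one_mul_add_one_mul_log_sub_nonneg {t : ℝ} (ht : 0 < t) :
    0 ≤ (t - 1) * ((t + 1) * log t - 2 * (t - 1)) := by
  have hmono : MonotoneOn (fun s ↦ (s + 1) * log s - 2 * (s - 1)) (Set.Ioi 0) := by
    refine monotoneOn_of_hasDerivWithinAt_nonneg (convex_Ioi 0)
      (f' := fun s ↦ log s - (1 - s⁻¹)) ?_ (fun s hs ↦ ?_) (fun s hs ↦ ?_)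
    · fun_prop (disch := exact fun x hx ↦ ne_of_gt hx)
    · rw [interior_Ioi] at hs
      have hs : s ≠ 0 := ne_of_gt hs
      exact ((((hasDerivAt_id' s).add_const 1).mul (hasDerivAt_log hs)).sub
        (((hasDerivAt_id' s).sub_const 1).const_mul 2)).congr_deriv
        (by field_simp; ring) |>.hasDerivWithinAt
    · rw [interior_Ioi] at hs
      exact sub_nonneg.2 (one_sub_inv_le_log_of_pos hs)
  rcases le_total t 1 with h | h
  · have := hmono ht (Set.mem_Ioi.2 one_pos) h
    exact mul_nonneg_of_nonpos_of_nonpos (by linarith) (by simpa using this)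
  · have := hmono (Set.mem_Ioi.2 one_pos) ht h
    exact mul_nonneg (by linarith) (by simpa using this)

theorem three_mul_sub_one_sq_le {t : ℝ} (ht : 0 ≤ t) :
    3 * (t - 1) ^ 2 ≤ 2 * (t + 2) * (t * log t - t + 1) := by
  have hmin : IsMinOn (fun s ↦ 2 * (s + 2) * (s * log s - s + 1) - 3 * (s - 1) ^ 2)
      (Set.Ici 0) 1 := by
    refine isMinOn_Ici_of_sub_mul_deriv_nonneg zero_le_one
      (f' := fun s ↦ 4 * ((s + 1) * log s - 2 * (s - 1))) ?_ (fun s hs ↦ ?_) (fun s hs ↦ ?_)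
    · have := continuous_mul_log
      exact Continuous.continuousOn (by fun_prop)
    · exact ((((hasDerivAt_id' s).add_const 2).const_mul 2).mul
        (((hasDerivAt_mul_log (ne_of_gt hs)).sub (hasDerivAt_id' s)).add_const 1) |>.sub
        ((((hasDerivAt_id' s).sub_const 1).pow 2).const_mul 3)).congr_deriv
        (by simp only [Pi.sub_apply]; ring)
    · nlinarith [sub_one_mul_add_one_mul_log_sub_nonneg hs]
  have := hmin ht
  norm_num at this
  linarith

theorem sq_integral_le_integral_mul_integral {α : Type*} [MeasurableSpace α] {μ : Measure α}
    {u v w : α → ℝ} (hu : Integrable u μ) (hv : Integrable v μ) (hw : Integrable w μ)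
    (hv0 : 0 ≤ᵐ[μ] v) (hw0 : 0 ≤ᵐ[μ] w) (huvw : ∀ᵐ x ∂μ, u x ^ 2 ≤ w x * v x) :
    (∫ x, u x ∂μ) ^ 2 ≤ (∫ x, w x ∂μ) * ∫ x, v x ∂μ := by
  have hquad : ∀ c : ℝ, 0 ≤ (∫ x, w x ∂μ) * (c * c) + (-2 * ∫ x, u x ∂μ) * c + ∫ x, v x ∂μ := by
    intro c
    have hpt : ∀ᵐ x ∂μ, 2 * c * u x ≤ c ^ 2 * w x + v x := by
      filter_upwards [hv0, hw0, huvw] with x hvx hwx hx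
      -- `(c²w + v)² - (2cu)² = (c²w - v)² + 4c²(wv - u²)`
      refine (le_abs_self _).trans (abs_le_of_sq_le_sq ?_ (by simp at hvx hwx; positivity))
      nlinarith [sq_nonneg (c ^ 2 * w x - v x), sq_nonneg c]
    have := integral_mono_ae (hu.const_mul (2 * c)) ((hw.const_mul (c ^ 2)).fun_add hv) hpt
    rw [integral_add (hw.const_mul _) hv, integral_const_mul, integral_const_mul] at this
    nlinarith
  have := discrim_le_zero hquad
  rw [discrim] at this
  nlinarith

theorem stmt_2 {Ω : Type*} [MeasurableSpace Ω] (μ : Measure Ω) [IsProbabilityMeasure μ]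
    (f : Ω → ℝ) (hf0 : ∀ x, 0 ≤ f x) (hf1 : ∫ x, f x ∂μ = 1)
    (hflogf : Integrable (fun x => f x * Real.log (f x)) μ) :
    ∫ x, f x * Real.log (f x) ∂μ ≥ (1 / 2) * (∫ x, |f x - 1| ∂μ) ^ 2 := by
  have hf : Integrable f μ := .of_integral_ne_zero (by simp [hf1])
  have hflogf_sub : Integrable (fun x ↦ f x * log (f x) - f x) μ := hflogf.sub hf
  have hw : Integrable (fun x ↦ f x * log (f x) - f x + 1) μ :=
    hflogf_sub.fun_add (integrable_const 1)
  have hv : Integrable (fun x ↦ 2 * (f x + 2) / 3) μ :=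
    ((hf.fun_add (integrable_const 2)).const_mul 2).div_const 3
  have hw_int : ∫ x, f x * log (f x) - f x + 1 ∂μ = ∫ x, f x * log (f x) ∂μ := by
    rw [integral_add hflogf_sub (integrable_const 1), integral_sub hflogf hf, hf1]
    simp
  have hv_int : ∫ x, 2 * (f x + 2) / 3 ∂μ = 2 := by
    rw [integral_div, integral_const_mul, integral_add hf (integrable_const 2), hf1]
    norm_num
  have hkey := fun x ↦ three_mul_sub_one_sq_le (hf0 x)
  have hcs := sq_integral_le_integral_mul_integral (u := fun x ↦ |f x - 1|)
    (hf.sub (integrable_const 1)).abs hv hw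
    (.of_forall fun x ↦ by have := hf0 x; positivity)
    (.of_forall fun x ↦ show 0 ≤ f x * log (f x) - f x + 1 by
      nlinarith [hkey x, hf0 x, sq_nonneg (f x - 1)])
    (.of_forall fun x ↦ by simp only [sq_abs]; nlinarith [hkey x])
  rw [hw_int, hv_int] at hcs
  linarith
end

section
/- Let p > 1 be a real number and let a, t be real numbers with 0 < a ≤ t < 1. Then (t^{1−p} a^p + (1−t)^{1−p} (1−a)^p − 1)/(p−1) ≥ 2 (t−a)². -/
/-!
Write `t ^ (1 - p) * a ^ p = a * (a / t) ^ (p - 1)` and similarly for the second term. Since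
`x ^ q ≥ 1 + q log x`, the numerator is at least `(p - 1)` times the binary Kullback–Leibler
divergence `a log (a / t) + (1 - a) log ((1 - a) / (1 - t))`, which by Pinsker's inequality is at
least `2 (t - a) ^ 2`.
-/

open Real Set

noncomputable def binaryKL (a t : ℝ) : ℝ :=
  a * log (a / t) + (1 - a) * log ((1 - a) / (1 - t))

theorem binaryKL_one_sub (a t : ℝ) : binaryKL (1 - a) (1 - t) = binaryKL a t := by
  simp only [binaryKL, sub_sub_cancel]
  ring

theorem hasDerivAt_binaryKL_sub_two_mul_sq {a x : ℝ} (ha₀ : 0 < a) (ha₁ : a < 1) (hx₀ : 0 < x)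
    (hx₁ : x < 1) :
    HasDerivAt (fun y => binaryKL a y - 2 * (y - a) ^ 2)
      ((x - a) * (2 * x - 1) ^ 2 / (x * (1 - x))) x := by
  have hlog : HasDerivAt (fun y => log y) x⁻¹ x := hasDerivAt_log hx₀.ne'
  have hlog_one_sub : HasDerivAt (fun y => log (1 - y)) (-1 / (1 - x)) x := by
    simpa using ((hasDerivAt_id x).const_sub 1).log (by simp only [id]; linarith)
  have hderiv := (((hlog.const_mul a).const_sub (a * log a)).add
    ((hlog_one_sub.const_mul (1 - a)).const_sub ((1 - a) * log (1 - a)))).sub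
    ((((hasDerivAt_id x).sub_const a).pow 2).const_mul 2)
  refine (hderiv.congr_deriv ?_).congr_of_eventuallyEq ?_
  · have : (1 : ℝ) - x ≠ 0 := by linarith
    field_simp
    simp only [id, Nat.cast_ofNat]
    ring
  · filter_upwards [Ioo_mem_nhds hx₀ hx₁] with y hy
    have : (1 : ℝ) - y ≠ 0 := by linarith [hy.2]
    simp only [binaryKL, log_div ha₀.ne' hy.1.ne', log_div (sub_ne_zero.2 ha₁.ne') this,
      Pi.add_apply, Pi.sub_apply, Pi.pow_apply, id]
    ring

theorem binaryKL_self {a : ℝ} (ha₀ : 0 < a) (ha₁ : a < 1) : binaryKL a a = 0 := by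
  simp [binaryKL, ha₀.ne', sub_ne_zero.2 ha₁.ne']

theorem two_mul_sq_sub_le_binaryKL {a t : ℝ} (ha₀ : 0 < a) (ha₁ : a < 1) (ht₀ : 0 < t)
    (ht₁ : t < 1) : 2 * (t - a) ^ 2 ≤ binaryKL a t := by
  wlog hat : a ≤ t generalizing a t
  · have := this (a := 1 - a) (t := 1 - t) (by linarith) (by linarith) (by linarith)
      (by linarith) (by linarith)
    rwa [binaryKL_one_sub, show 1 - t - (1 - a) = -(t - a) by ring, neg_sq] at this
  set g : ℝ → ℝ := fun y => binaryKL a y - 2 * (y - a) ^ 2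
  have hderiv : ∀ x ∈ Icc a t, HasDerivAt g ((x - a) * (2 * x - 1) ^ 2 / (x * (1 - x))) x :=
    fun x hx => hasDerivAt_binaryKL_sub_two_mul_sq ha₀ ha₁ (ha₀.trans_le hx.1) (hx.2.trans_lt ht₁)
  have hmono : MonotoneOn g (Icc a t) := by
    refine monotoneOn_of_hasDerivWithinAt_nonneg (convex_Icc a t)
      (fun x hx => (hderiv x hx).continuousAt.continuousWithinAt)
      (fun x hx => (hderiv x (interior_subset hx)).hasDerivWithinAt) fun x hx => ?_
    rw [interior_Icc] at hx
    have : 0 < x * (1 - x) := mul_pos (ha₀.trans hx.1) (by linarith [hx.2])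
    exact div_nonneg (mul_nonneg (by linarith [hx.1]) (sq_nonneg _)) this.le
  have := hmono (left_mem_Icc.2 hat) (right_mem_Icc.2 hat) hat
  simp only [g, binaryKL_self ha₀ ha₁, sub_self] at this
  linarith

theorem one_add_mul_log_le_rpow {x : ℝ} (hx : 0 < x) (q : ℝ) : 1 + q * log x ≤ x ^ q := by
  rw [rpow_def_of_pos hx, mul_comm, add_comm]
  exact add_one_le_exp _

theorem rpow_one_sub_mul_rpow {a t : ℝ} (ha : 0 < a) (ht : 0 < t) (p : ℝ) :
    t ^ (1 - p) * a ^ p = a * (a / t) ^ (p - 1) := by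
  rw [div_rpow ha.le ht.le, show 1 - p = -(p - 1) by ring, rpow_neg ht.le,
    show a ^ p = a ^ (1 + (p - 1)) by ring_nf, rpow_add ha, rpow_one]
  ring

theorem stmt_4 (p : ℝ) (hp : 1 < p) (a t : ℝ) (ha : 0 < a) (hat : a ≤ t) (ht : t < 1) :
    (t ^ (1 - p) * a ^ p + (1 - t) ^ (1 - p) * (1 - a) ^ p - 1) / (p - 1) ≥
      2 * (t - a) ^ 2 := by
  have ht₀ : 0 < t := ha.trans_le hat
  have ha₁ : a < 1 := hat.trans_lt ht
  have hp₁ : 0 < p - 1 := sub_pos.2 hp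
  have hfirst := mul_le_mul_of_nonneg_left
    (one_add_mul_log_le_rpow (div_pos ha ht₀) (p - 1)) ha.le
  have hsecond := mul_le_mul_of_nonneg_left
    (one_add_mul_log_le_rpow (div_pos (sub_pos.2 ha₁) (sub_pos.2 ht)) (p - 1)) (sub_pos.2 ha₁).le
  have hpinsker := mul_le_mul_of_nonneg_left
    (two_mul_sq_sub_le_binaryKL ha ha₁ ht₀ ht) hp₁.le
  rw [ge_iff_le, le_div_iff₀ hp₁, rpow_one_sub_mul_rpow ha ht₀,
    rpow_one_sub_mul_rpow (sub_pos.2 ha₁) (sub_pos.2 ht)]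
  rw [binaryKL] at hpinsker
  linarith
end

section
/- Let 0 < p < 1 be a real number and let a, t be real numbers with 0 < a ≤ t < 1. Then (t^{1−p} a^p + (1−t)^{1−p} (1−a)^p − 1)/(p−1) ≥ ((p+1)^{p+1}/(2 p^{p−1})) · (t−a)². -/
/-!
Write `t = m + e` and `a = m - e`. The function
`F x = (m + x) ^ (1 - p) * (m - x) ^ p + (1 - m + x) ^ p * (1 - m - x) ^ (1 - p)`
has `F 0 = 1` and `F' 0 = 0`, and `F'' x` is `-p (1 - p)` times a quantity that AM-GM (once in
each summand, once for their sum) bounds below by `16`. Hence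
`F e ≤ 1 - 8 p (1 - p) e² = 1 - 2 p (1 - p) (t - a)²`. The constant of the theorem is at most
`2 p`, because `(p + 1) ^ (p + 1) ≤ 4 p ^ p` is Bernoulli's inequality `(1 + 1 / p) ^ p ≤ 2`.
-/

open Real Set

theorem monotoneOn_Icc_of_hasDerivAt_nonneg {f f' : ℝ → ℝ} {a b : ℝ}
    (hf : ∀ x ∈ Icc a b, HasDerivAt f (f' x) x) (hf' : ∀ x ∈ Icc a b, 0 ≤ f' x) :
    MonotoneOn f (Icc a b) :=
  monotoneOn_of_hasDerivWithinAt_nonneg (convex_Icc a b)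
    (fun x hx ↦ (hf x hx).continuousAt.continuousWithinAt)
    (fun x hx ↦ (hf x (interior_subset hx)).hasDerivWithinAt)
    (fun x hx ↦ hf' x (interior_subset hx))

theorem monotoneOn_Icc_of_second_deriv_nonneg {f f' f'' : ℝ → ℝ} {a b : ℝ}
    (hf : ∀ x ∈ Icc a b, HasDerivAt f (f' x) x)
    (hf' : ∀ x ∈ Icc a b, HasDerivAt f' (f'' x) x) (hf'' : ∀ x ∈ Icc a b, 0 ≤ f'' x)
    (ha : 0 ≤ f' a) :
    MonotoneOn f (Icc a b) := by
  have hmono : MonotoneOn f' (Icc a b) := monotoneOn_Icc_of_hasDerivAt_nonneg hf' hf''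
  refine monotoneOn_Icc_of_hasDerivAt_nonneg hf fun x hx ↦ ?_
  exact ha.trans (hmono (left_mem_Icc.2 (hx.1.trans hx.2)) hx hx.1)

noncomputable def antidiagPow (r s m x : ℝ) : ℝ := (m + x) ^ r * (m - x) ^ s

section AntidiagPow

variable {r s m x : ℝ}

theorem antidiagPow_zero (hm : 0 < m) : antidiagPow r s m 0 = m ^ (r + s) := by
  simp [antidiagPow, rpow_add hm]

theorem hasDerivAt_antidiagPow (h₁ : 0 < m + x) (h₂ : 0 < m - x) :
    HasDerivAt (antidiagPow r s m)
      (r * antidiagPow (r - 1) s m x - s * antidiagPow r (s - 1) m x) x := by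
  have hu : HasDerivAt (fun y ↦ (m + y) ^ r) (1 * r * (m + x) ^ (r - 1)) x :=
    ((hasDerivAt_id x).const_add m).rpow_const (Or.inl h₁.ne')
  have hv : HasDerivAt (fun y ↦ (m - y) ^ s) (-1 * s * (m - x) ^ (s - 1)) x :=
    ((hasDerivAt_id x).const_sub m).rpow_const (Or.inl h₂.ne')
  exact (hu.mul hv).congr_deriv (by simp only [antidiagPow]; ring)

theorem hasDerivAt_deriv_antidiagPow (hrs : r + s = 1) (h₁ : 0 < m + x) (h₂ : 0 < m - x) :
    HasDerivAt (fun y ↦ r * antidiagPow (r - 1) s m y - s * antidiagPow r (s - 1) m y)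
      (-(r * s) * (2 * m) ^ 2 * antidiagPow (r - 2) (s - 2) m x) x := by
  refine (((hasDerivAt_antidiagPow h₁ h₂).const_mul r).sub
    ((hasDerivAt_antidiagPow h₁ h₂).const_mul s)).congr_deriv ?_
  simp only [antidiagPow, rpow_sub h₁, rpow_sub h₂, rpow_one, rpow_two]
  field_simp
  linear_combination (r * (m - x) ^ 2 + s * (m + x) ^ 2) * hrs

end AntidiagPow

section Curvature

variable {u v : ℝ}

theorem four_mul_rpow_le_sq_mul_rpow (hu : 0 < u) (hv : 0 < v) (r s : ℝ) :
    4 * (u ^ (r - 1) * v ^ (s - 1)) ≤ (u + v) ^ 2 * (u ^ (r - 2) * v ^ (s - 2)) := by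
  have hu' : u ^ (r - 1) = u ^ (r - 2) * u := by rw [← rpow_add_one hu.ne']; ring_nf
  have hv' : v ^ (s - 1) = v ^ (s - 2) * v := by rw [← rpow_add_one hv.ne']; ring_nf
  have hamgm : 4 * (u * v) ≤ (u + v) ^ 2 := by nlinarith [sq_nonneg (u - v)]
  rw [hu', hv']
  nlinarith [mul_le_mul_of_nonneg_right hamgm (by positivity : 0 ≤ u ^ (r - 2) * v ^ (s - 2))]

variable {r s u' v' : ℝ}

theorem four_le_rpow_mul_rpow_mul_rpow_mul_rpow (hr : r ≤ 1) (hs : s ≤ 1) (hrs : r + s = 1)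
    (hu : 0 < u) (hu' : 0 < u') (huu' : u + u' = 1) (hv : 0 < v) (hv' : 0 < v')
    (hvv' : v + v' = 1) :
    4 ≤ (u ^ (r - 1) * v ^ (s - 1)) * (u' ^ (r - 1) * v' ^ (s - 1)) := by
  obtain rfl : u' = 1 - u := by linarith
  obtain rfl : v' = 1 - v := by linarith
  have hu4 : u * (1 - u) ≤ 1 / 4 := by nlinarith [sq_nonneg (2 * u - 1)]
  have hv4 : v * (1 - v) ≤ 1 / 4 := by nlinarith [sq_nonneg (2 * v - 1)]
  calc (4 : ℝ) = (1 / 4) ^ (r - 1) * (1 / 4) ^ (s - 1) := by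
        rw [← rpow_add (by norm_num), show r - 1 + (s - 1) = -1 by linarith, rpow_neg_one]
        norm_num
    _ ≤ (u * (1 - u)) ^ (r - 1) * (v * (1 - v)) ^ (s - 1) :=
        mul_le_mul (rpow_le_rpow_of_nonpos (by positivity) hu4 (by linarith))
          (rpow_le_rpow_of_nonpos (by positivity) hv4 (by linarith)) (by positivity)
          (by positivity)
    _ = _ := by rw [mul_rpow hu.le hu'.le, mul_rpow hv.le hv'.le]; ring

theorem sixteen_le_sq_mul_rpow_add_sq_mul_rpow (hr : 0 ≤ r) (hs : 0 ≤ s) (hrs : r + s = 1)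
    (hu : 0 < u) (hu' : 0 < u') (huu' : u + u' = 1) (hv : 0 < v) (hv' : 0 < v')
    (hvv' : v + v' = 1) :
    16 ≤ (u + v) ^ 2 * (u ^ (r - 2) * v ^ (s - 2))
      + (u' + v') ^ 2 * (u' ^ (r - 2) * v' ^ (s - 2)) := by
  set X := u ^ (r - 1) * v ^ (s - 1)
  set Y := u' ^ (r - 1) * v' ^ (s - 1)
  have hXY : 4 ≤ X * Y :=
    four_le_rpow_mul_rpow_mul_rpow_mul_rpow (by linarith) (by linarith) hrs hu hu' huu' hv hv' hvv'
  have hX : 0 < X := by positivity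
  have hY : 0 < Y := by positivity
  have hsum : 4 ≤ X + Y := by nlinarith [sq_nonneg (X - Y)]
  linarith [four_mul_rpow_le_sq_mul_rpow hu hv r s, four_mul_rpow_le_sq_mul_rpow hu' hv' r s]

end Curvature

section Affinity

variable {r s m e : ℝ}

theorem sixteen_le_antidiagPow_add_antidiagPow (hr : 0 ≤ r) (hs : 0 ≤ s) (hrs : r + s = 1)
    {x : ℝ} (h₁ : 0 < m + x) (h₂ : 0 < m - x) (h₃ : 0 < 1 - m + x) (h₄ : 0 < 1 - m - x) :
    16 ≤ (2 * m) ^ 2 * antidiagPow (r - 2) (s - 2) m x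
      + (2 * (1 - m)) ^ 2 * antidiagPow (s - 2) (r - 2) (1 - m) x := by
  have h := sixteen_le_sq_mul_rpow_add_sq_mul_rpow hr hs hrs h₁ h₄ (by ring) h₂ h₃ (by ring)
  simp only [antidiagPow]
  linarith

theorem antidiagPow_add_antidiagPow_le (hr : 0 ≤ r) (hs : 0 ≤ s) (hrs : r + s = 1)
    (he : 0 ≤ e) (hem : e < m) (hme : m + e < 1) :
    antidiagPow r s m e + antidiagPow s r (1 - m) e ≤ 1 - 8 * r * s * e ^ 2 := by
  have hpos : ∀ x ∈ Icc 0 e, 0 < m + x ∧ 0 < m - x ∧ 0 < 1 - m + x ∧ 0 < 1 - m - x :=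
    fun x ⟨hx₀, hxe⟩ ↦ ⟨by linarith, by linarith, by linarith, by linarith⟩
  let W : ℝ → ℝ := fun x ↦
    1 - 8 * r * s * x ^ 2 - (antidiagPow r s m x + antidiagPow s r (1 - m) x)
  let W' : ℝ → ℝ := fun x ↦ -(8 * r * s * (2 * x)) -
    ((r * antidiagPow (r - 1) s m x - s * antidiagPow r (s - 1) m x) +
      (s * antidiagPow (s - 1) r (1 - m) x - r * antidiagPow s (r - 1) (1 - m) x))
  let W'' : ℝ → ℝ := fun x ↦ -(8 * r * s * 2) -
    (-(r * s) * (2 * m) ^ 2 * antidiagPow (r - 2) (s - 2) m x +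
      -(s * r) * (2 * (1 - m)) ^ 2 * antidiagPow (s - 2) (r - 2) (1 - m) x)
  have hW : ∀ x ∈ Icc 0 e, HasDerivAt W (W' x) x := fun x hx ↦ by
    obtain ⟨h₁, h₂, h₃, h₄⟩ := hpos x hx
    exact (((hasDerivAt_pow 2 x).const_mul (8 * r * s)).const_sub 1).sub
      ((hasDerivAt_antidiagPow h₁ h₂).add (hasDerivAt_antidiagPow h₃ h₄)) |>.congr_deriv
      (by simp only [W']; push_cast; ring)
  have hW' : ∀ x ∈ Icc 0 e, HasDerivAt W' (W'' x) x := fun x hx ↦ by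
    obtain ⟨h₁, h₂, h₃, h₄⟩ := hpos x hx
    exact ((((hasDerivAt_id x).const_mul 2).const_mul (8 * r * s)).neg).sub
      ((hasDerivAt_deriv_antidiagPow hrs h₁ h₂).add
        (hasDerivAt_deriv_antidiagPow (by linarith) h₃ h₄)) |>.congr_deriv
      (by simp only [W'']; ring)
  have hW'' : ∀ x ∈ Icc 0 e, 0 ≤ W'' x := fun x hx ↦ by
    obtain ⟨h₁, h₂, h₃, h₄⟩ := hpos x hx
    have := mul_nonneg (mul_nonneg hr hs)
      (sub_nonneg.2 (sixteen_le_antidiagPow_add_antidiagPow hr hs hrs h₁ h₂ h₃ h₄))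
    simp only [W'']
    linarith
  have hm : 0 < m := by linarith
  have hm' : 0 < 1 - m := by linarith
  have hW'0 : W' 0 = 0 := by
    simp only [W', antidiagPow_zero hm, antidiagPow_zero hm', show r - 1 + s = 0 by linarith,
      show r + (s - 1) = 0 by linarith, show s - 1 + r = 0 by linarith,
      show s + (r - 1) = 0 by linarith, rpow_zero]
    ring
  have hW0 : W 0 = 0 := by
    simp only [W, antidiagPow_zero hm, antidiagPow_zero hm', hrs, add_comm s r, rpow_one]
    ring
  have hWe : W 0 ≤ W e :=
    monotoneOn_Icc_of_second_deriv_nonneg hW hW' hW'' hW'0.ge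
      (left_mem_Icc.2 he) (right_mem_Icc.2 he) he
  simp only [hW0, W] at hWe
  linarith

theorem rpow_mul_rpow_add_rpow_mul_rpow_le {a t : ℝ} (hr : 0 ≤ r) (hs : 0 ≤ s)
    (hrs : r + s = 1) (ha : 0 < a) (hat : a ≤ t) (ht : t < 1) :
    t ^ r * a ^ s + (1 - t) ^ r * (1 - a) ^ s ≤ 1 - 2 * r * s * (t - a) ^ 2 := by
  obtain ⟨m, e, rfl, rfl⟩ : ∃ m e, t = m + e ∧ a = m - e :=
    ⟨(a + t) / 2, (t - a) / 2, by ring, by ring⟩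
  have h := antidiagPow_add_antidiagPow_le hr hs hrs (e := e) (m := m) (by linarith)
    (by linarith) ht
  simp only [antidiagPow] at h
  rw [show 1 - (m + e) = 1 - m - e by ring, show 1 - (m - e) = 1 - m + e by ring]
  linarith

end Affinity

theorem add_one_rpow_add_one_le {p : ℝ} (hp0 : 0 < p) (hp1 : p ≤ 1) :
    (p + 1) ^ (p + 1) ≤ 4 * p ^ p := by
  have hbernoulli : (1 + 1 / p) ^ p ≤ 2 := by
    have := rpow_one_add_le_one_add_mul_self (s := 1 / p) (by linarith [one_div_pos.2 hp0])
      hp0.le hp1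
    rwa [mul_one_div_cancel hp0.ne', one_add_one_eq_two] at this
  calc (p + 1) ^ (p + 1) = (p + 1) * (p ^ p * (1 + 1 / p) ^ p) := by
        rw [rpow_add_one (by positivity), ← mul_rpow hp0.le (by positivity)]
        field_simp
    _ ≤ (p + 1) * (p ^ p * 2) := by gcongr
    _ ≤ 4 * p ^ p := by nlinarith [rpow_pos_of_pos hp0 p]

theorem stmt_5 (p : ℝ) (hp0 : 0 < p) (hp1 : p < 1) (a t : ℝ) (ha : 0 < a) (hat : a ≤ t)
    (ht : t < 1) :
    (t ^ (1 - p) * a ^ p + (1 - t) ^ (1 - p) * (1 - a) ^ p - 1) / (p - 1) ≥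
      ((p + 1) ^ (p + 1) / (2 * p ^ (p - 1))) * (t - a) ^ 2 := by
  have hsum := rpow_mul_rpow_add_rpow_mul_rpow_le (r := 1 - p) (s := p) (by linarith) hp0.le
    (by ring) ha hat ht
  have hconst : (p + 1) ^ (p + 1) / (2 * p ^ (p - 1)) ≤ 2 * p := by
    rw [div_le_iff₀ (by positivity)]
    calc (p + 1) ^ (p + 1) ≤ 4 * p ^ p := add_one_rpow_add_one_le hp0 hp1.le
      _ = 2 * p * (2 * p ^ (p - 1)) := by rw [rpow_sub_one hp0.ne']; field_simp; ring
  calc (p + 1) ^ (p + 1) / (2 * p ^ (p - 1)) * (t - a) ^ 2 ≤ 2 * p * (t - a) ^ 2 := by gcongr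
    _ ≤ _ := by rw [le_div_iff_of_neg (by linarith)]; linarith
end

section
/- Let p > 1 be a real number and let a, t be real numbers with 0 < a ≤ t < 1. Then (1−t)^{−p} (1−a)^p − t^{−p} a^p ≥ (t−a)/(t(1−t)) ≥ 4 (t−a). -/
open Real

theorem stmt_6 (p : ℝ) (hp : 1 < p) (a t : ℝ) (ha : 0 < a) (hat : a ≤ t) (ht : t < 1) :
    (1 - t) ^ (-p) * (1 - a) ^ p - t ^ (-p) * a ^ p ≥ (t - a) / (t * (1 - t)) ∧
      (t - a) / (t * (1 - t)) ≥ 4 * (t - a) := by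
  have ht0 : 0 < t := lt_of_lt_of_le ha hat
  have h1t : 0 < 1 - t := by linarith
  have h1a : 0 < 1 - a := by linarith
  have hx1 : a / t ≤ 1 := by
    rw [div_le_one ht0]; exact hat
  have hy1 : 1 ≤ (1 - a) / (1 - t) := by
    rw [le_div_iff₀ h1t]; linarith
  have hx0 : 0 < a / t := div_pos ha ht0
  have hxp : (a / t) ^ p ≤ a / t := by
    calc (a / t) ^ p ≤ (a / t) ^ (1 : ℝ) :=
          Real.rpow_le_rpow_of_exponent_ge hx0 hx1 hp.le
      _ = a / t := Real.rpow_one _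
  have hyp : (1 - a) / (1 - t) ≤ ((1 - a) / (1 - t)) ^ p := by
    calc (1 - a) / (1 - t) = ((1 - a) / (1 - t)) ^ (1 : ℝ) := (Real.rpow_one _).symm
      _ ≤ ((1 - a) / (1 - t)) ^ p :=
          Real.rpow_le_rpow_of_exponent_le hy1 hp.le
  have e1 : (1 - t) ^ (-p) * (1 - a) ^ p = ((1 - a) / (1 - t)) ^ p := by
    rw [Real.div_rpow h1a.le h1t.le, Real.rpow_neg h1t.le]
    ring
  have e2 : t ^ (-p) * a ^ p = (a / t) ^ p := by
    rw [Real.div_rpow ha.le ht0.le, Real.rpow_neg ht0.le]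
    ring
  have e3 : (t - a) / (t * (1 - t)) = (1 - a) / (1 - t) - a / t := by
    field_simp
    ring
  constructor
  · rw [e1, e2, e3]; linarith
  · rw [ge_iff_le, e3]
    have h4 : 4 * (t - a) * (t * (1 - t)) ≤ t - a := by
      nlinarith [sq_nonneg (2 * t - 1), sub_nonneg.mpr hat]
    rw [← e3, le_div_iff₀ (by positivity)]
    linarith
end

section
/- Let 0 < p < 1 be a real number and let a, t be real numbers with 0 < a ≤ t < 1. Then (1−t)^{−p} (1−a)^p − t^{−p} a^p ≥ ((p+1)^{p+1}/p^{p−1}) · (t−a). -/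
open Real

lemma aux_pow_bound (p : ℝ) (hp0 : 0 < p) (hp1 : p ≤ 1) : (p+1)^(p+1) ≤ 4 * p^p := by
  have hp1' : 0 < p + 1 := by linarith
  have hdiv : 0 < (p+1)/p := by positivity
  have hlog2 : (0.6931471803 : ℝ) < Real.log 2 := Real.log_two_gt_d9
  -- key : ((p+1)/p)^p ≤ 2
  have hkey : ((p+1)/p) ^ p ≤ 2 := by
    rw [Real.rpow_def_of_pos hdiv, mul_comm]
    have h1 : Real.log ((p+1)/(2*p)) ≤ (p+1)/(2*p) - 1 :=
      Real.log_le_sub_one_of_pos (by positivity)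
    have h2 : Real.log ((p+1)/p) = Real.log 2 + Real.log ((p+1)/(2*p)) := by
      rw [← Real.log_mul (by norm_num) (by positivity)]
      congr 1
      field_simp
    have h3 : p * Real.log ((p+1)/p) ≤ p * Real.log 2 + (1-p)/2 := by
      rw [h2]
      have := mul_le_mul_of_nonneg_left h1 hp0.le
      have heq : p * ((p+1)/(2*p) - 1) = (1-p)/2 := by field_simp; ring
      nlinarith
    have h4 : p * Real.log ((p+1)/p) ≤ Real.log 2 := by nlinarith
    calc Real.exp (p * Real.log ((p+1)/p)) ≤ Real.exp (Real.log 2) := Real.exp_le_exp.2 h4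
      _ = 2 := Real.exp_log (by norm_num)
  have hsplit : (p+1)^(p+1) = ((p+1)/p)^p * p^p * (p+1) := by
    rw [← Real.mul_rpow (by positivity) hp0.le, div_mul_cancel₀ _ hp0.ne',
      Real.rpow_add hp1', Real.rpow_one]
  rw [hsplit]
  have hpp : (0:ℝ) < p ^ p := Real.rpow_pos_of_pos hp0 p
  have hq : ((p+1)/p)^p * (p+1) ≤ 4 := by nlinarith [Real.rpow_pos_of_pos hdiv p]
  nlinarith

lemma aux_amgm (p x t : ℝ) (hp0 : 0 < p) (hp1 : p < 1) (hx0 : 0 < x) (hx1 : x < 1)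
    (ht0 : 0 < t) (ht1 : t < 1) :
    4 ≤ (1-x)^(p-1) * (1-t)^(-p) + x^(p-1) * t^(-p) := by
  have h1x : (0:ℝ) < 1 - x := by linarith
  have h1t : (0:ℝ) < 1 - t := by linarith
  set X := (1-x)^(p-1) * (1-t)^(-p) with hX
  set Y := x^(p-1) * t^(-p) with hY
  have hXpos : 0 < X := by positivity
  have hYpos : 0 < Y := by positivity
  set m := (x*(1-x))^((p-1)/2) * (t*(1-t))^(-p/2) with hm
  have hmpos : 0 < m := by positivity
  -- m^2 = X * Y
  have hmsq : m^2 = X * Y := by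
    have e1 : (x*(1-x))^((p-1)/2) * (x*(1-x))^((p-1)/2) = (x*(1-x))^(p-1) := by
      rw [← Real.rpow_add (by positivity)]; norm_num
    have e2 : (t*(1-t))^(-p/2) * (t*(1-t))^(-p/2) = (t*(1-t))^(-p) := by
      rw [← Real.rpow_add (by positivity)]; ring_nf
    have e3 : (x*(1-x))^(p-1) = x^(p-1) * (1-x)^(p-1) :=
      Real.mul_rpow hx0.le h1x.le
    have e4 : (t*(1-t))^(-p) = t^(-p) * (1-t)^(-p) :=
      Real.mul_rpow ht0.le h1t.le
    rw [hm, hX, hY]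
    calc ((x*(1-x))^((p-1)/2) * (t*(1-t))^(-p/2))^2
        = ((x*(1-x))^((p-1)/2) * (x*(1-x))^((p-1)/2)) *
          ((t*(1-t))^(-p/2) * (t*(1-t))^(-p/2)) := by ring
      _ = (x*(1-x))^(p-1) * (t*(1-t))^(-p) := by rw [e1, e2]
      _ = (1-x)^(p-1) * (1-t)^(-p) * (x^(p-1) * t^(-p)) := by rw [e3, e4]; ring
  -- m ≥ 2
  have hx4 : x*(1-x) ≤ 1/4 := by nlinarith [sq_nonneg (x - 1/2)]
  have ht4 : t*(1-t) ≤ 1/4 := by nlinarith [sq_nonneg (t - 1/2)]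
  have hb1 : ((1:ℝ)/4)^((p-1)/2) ≤ (x*(1-x))^((p-1)/2) :=
    Real.rpow_le_rpow_of_nonpos (by positivity) hx4 (by linarith)
  have hb2 : ((1:ℝ)/4)^(-p/2) ≤ (t*(1-t))^(-p/2) :=
    Real.rpow_le_rpow_of_nonpos (by positivity) ht4 (by linarith)
  have hprod : ((1:ℝ)/4)^((p-1)/2) * ((1:ℝ)/4)^(-p/2) ≤ m := by
    have q1 : (0:ℝ) < ((1:ℝ)/4)^((p-1)/2) := Real.rpow_pos_of_pos (by norm_num) _
    have q2 : (0:ℝ) < ((1:ℝ)/4)^(-p/2) := Real.rpow_pos_of_pos (by norm_num) _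
    have q3 : (0:ℝ) < (x*(1-x))^((p-1)/2) := Real.rpow_pos_of_pos (by positivity) _
    rw [hm]
    exact mul_le_mul hb1 hb2 q2.le q3.le
  have hval : ((1:ℝ)/4)^((p-1)/2) * ((1:ℝ)/4)^(-p/2) = 2 := by
    rw [← Real.rpow_add (by norm_num)]
    have : (p-1)/2 + -p/2 = -(1/2 : ℝ) := by ring
    rw [this]
    have h22 : (2:ℝ)^((2:ℕ):ℝ) = 4 := by rw [Real.rpow_natCast]; norm_num
    have h14 : ((1:ℝ)/4) = (2:ℝ)^(-2 : ℝ) := by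
      rw [show (-2:ℝ) = -((2:ℕ):ℝ) by norm_num, Real.rpow_neg (by norm_num : (0:ℝ) ≤ 2), h22]
      norm_num
    rw [h14, ← Real.rpow_mul (by norm_num : (0:ℝ) ≤ 2)]
    norm_num
  have hm2 : (2:ℝ) ≤ m := by rw [← hval]; exact hprod
  nlinarith [sq_nonneg (X - Y), sq_nonneg (X + Y - 4), hmsq, hm2, hXpos, hYpos]

theorem stmt_7 (p : ℝ) (hp0 : 0 < p) (hp1 : p < 1) (a t : ℝ) (ha : 0 < a) (hat : a ≤ t)
    (ht : t < 1) :
    (1 - t) ^ (-p) * (1 - a) ^ p - t ^ (-p) * a ^ p ≥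
      ((p + 1) ^ (p + 1) / p ^ (p - 1)) * (t - a) := by
  have ht0 : 0 < t := lt_of_lt_of_le ha hat
  have h1t : (0:ℝ) < 1 - t := by linarith
  set C : ℝ := (p + 1) ^ (p + 1) / p ^ (p - 1) with hC
  have hCle : C ≤ 4 * p := by
    have h1 : (p+1)^(p+1) ≤ 4 * p^p := aux_pow_bound p hp0 hp1.le
    have hD : (0:ℝ) < p ^ (p-1) := Real.rpow_pos_of_pos hp0 _
    rw [hC, div_le_iff₀ hD]
    have hpp : p * p^(p-1) = p^p := by
      rw [Real.rpow_sub hp0, Real.rpow_one]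
      field_simp
    linarith
  set f : ℝ → ℝ := fun x => (1-t)^(-p) * (1-x)^p - t^(-p) * x^p + C * x with hf
  have hanti : AntitoneOn f (Set.Icc a t) := by
    have hderiv : ∀ x ∈ Set.Icc a t, HasDerivAt f
        ((1-t)^(-p) * (p * (1-x)^(p-1) * (-1)) - t^(-p) * (p * x^(p-1)) + C * 1) x := by
      intro x hx
      have hx0 : 0 < x := lt_of_lt_of_le ha hx.1
      have hx1 : x < 1 := lt_of_le_of_lt hx.2 ht
      have h1x : (0:ℝ) < 1 - x := by linarith
      have d1 : HasDerivAt (fun y : ℝ => 1 - y) (-1) x := by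
        simpa using (hasDerivAt_id x).const_sub 1
      have d2 : HasDerivAt (fun y : ℝ => (1-y)^p) (p * (1-x)^(p-1) * (-1)) x :=
        (Real.hasDerivAt_rpow_const (Or.inl h1x.ne')).comp x d1
      have d3 : HasDerivAt (fun y : ℝ => y^p) (p * x^(p-1)) x :=
        Real.hasDerivAt_rpow_const (Or.inl hx0.ne')
      exact ((d2.const_mul ((1-t)^(-p))).sub (d3.const_mul (t^(-p)))).add
        ((hasDerivAt_id x).const_mul C)
    apply antitoneOn_of_deriv_nonpos (convex_Icc a t)
    · exact fun x hx => ((hderiv x hx).differentiableAt.continuousAt).continuousWithinAt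
    · intro x hx
      exact ((hderiv x (interior_subset hx)).differentiableAt).differentiableWithinAt
    · intro x hx
      rw [(hderiv x (interior_subset hx)).deriv]
      rw [interior_Icc] at hx
      have hx0 : 0 < x := lt_trans ha hx.1
      have hx1 : x < 1 := lt_trans hx.2 ht
      have hsum : 4 ≤ (1-x)^(p-1) * (1-t)^(-p) + x^(p-1) * t^(-p) :=
        aux_amgm p x t hp0 hp1 hx0 hx1 ht0 ht
      nlinarith [hCle, mul_le_mul_of_nonneg_left hsum hp0.le]
  have hmem_a : a ∈ Set.Icc a t := Set.mem_Icc.2 ⟨le_refl a, hat⟩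
  have hmem_t : t ∈ Set.Icc a t := Set.mem_Icc.2 ⟨hat, le_refl t⟩
  have hle : f t ≤ f a := hanti hmem_a hmem_t hat
  have hft : f t = 1 - 1 + C * t := by
    rw [hf]
    simp only
    rw [← Real.rpow_add h1t, ← Real.rpow_add ht0]
    norm_num
  rw [hf] at hle hft
  simp only at hle hft
  rw [hft] at hle
  linarith
end

section
/- Let n ≥ 1, let B be the closed Euclidean unit ball in R^n, and let x₀ ∈ R^n be a unit vector. There exist positive constants c, C such that for every ε ∈ (0,1): c ε ≤ vol( B Δ (ε x₀ + B) ) ≤ C ε, where ε x₀ + B is the translate of B by ε x₀, Δ denotes the symmetric difference, and vol is n-dimensional Lebesgue measure. -/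
/-!
Write `B` for the closed unit ball, `d` for the dimension and `v = ε x₀`. The symmetric difference
`B ∆ (v + B)` lies in the annulus `1 - ε ≤ ‖x‖ ≤ 1 + ε`, whose volume is
`((1 + ε)^d - (1 - ε)^d) vol B = O(ε)`. For the lower bound take the cap
`D = B ∩ {⟪x, x₀⟫ ≤ -1/2}` on the side of `B` away from `v`, and `t = 1 - ε/4`. A point `x` of
`D \ t D` has `‖x‖ > t`, so `‖x - v‖² = ‖x‖² - 2ε⟪x, x₀⟫ + ε² > t² + ε > 1` and `x ∉ v + B`.
Since `vol (t D) = t^d vol D`, this gives `vol (B ∆ (v + B)) ≥ (1 - t^d) vol D ≥ (ε/4) vol D`.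
-/

open MeasureTheory Measure Pointwise Metric Module

theorem symmDiff_closedBall_subset_closedBall_sdiff_ball {X : Type*} [PseudoMetricSpace X]
    (x y : X) (r : ℝ) :
    symmDiff (closedBall x r) (closedBall y r) ⊆
      closedBall x (r + dist x y) \ ball x (r - dist x y) := by
  intro z hz
  have := dist_triangle z x y
  have := dist_triangle z y x
  have := dist_comm x y
  rcases Set.mem_symmDiff.1 hz with ⟨hx, hy⟩ | ⟨hy, hx⟩ <;>
  · simp only [mem_closedBall, not_le] at hx hy
    exact ⟨mem_closedBall.2 (by linarith), fun h => by rw [mem_ball] at h; linarith⟩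

section NormedSpace

variable {E : Type*} [NormedAddCommGroup E] [NormedSpace ℝ E] [FiniteDimensional ℝ E]
  [MeasurableSpace E] [BorelSpace E] (μ : Measure E) [μ.IsAddHaarMeasure]

theorem addHaar_real_closedBall_sdiff_ball (x : E) {r R : ℝ} (hr : 0 < r) (hrR : r ≤ R) :
    μ.real (closedBall x R \ ball x r) =
      (R ^ finrank ℝ E - r ^ finrank ℝ E) * μ.real (ball 0 1) := by
  have hball : μ.real (ball x r) = r ^ finrank ℝ E * μ.real (ball 0 1) := by
    rw [measureReal_def, addHaar_ball_of_pos μ x hr, ENNReal.toReal_mul,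
      ENNReal.toReal_ofReal (by positivity), measureReal_def]
  rw [measureReal_sdiff (ball_subset_closedBall.trans (closedBall_subset_closedBall hrR))
      measurableSet_ball measure_closedBall_lt_top.ne,
    addHaar_real_closedBall μ x (hr.le.trans hrR), hball, sub_mul]

theorem measureReal_symmDiff_closedBall_le {v : E} (hv : ‖v‖ < 1) :
    μ.real (symmDiff (closedBall 0 1) (closedBall v 1)) ≤
      2 * finrank ℝ E * 2 ^ (finrank ℝ E - 1) * μ.real (ball 0 1) * ‖v‖ := by
  set d := finrank ℝ E
  have hsub := symmDiff_closedBall_subset_closedBall_sdiff_ball (0 : E) v 1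
  rw [dist_zero_left] at hsub
  have hpow : (1 + ‖v‖) ^ d - (1 - ‖v‖) ^ d ≤ 2 * ‖v‖ * d * 2 ^ (d - 1) := by
    have hmax : max |1 + ‖v‖| |1 - ‖v‖| ≤ 2 := by
      rw [abs_of_nonneg (by positivity), abs_of_nonneg (by linarith)]
      exact max_le (by linarith) (by linarith [norm_nonneg v])
    calc (1 + ‖v‖) ^ d - (1 - ‖v‖) ^ d
        ≤ |(1 + ‖v‖) - (1 - ‖v‖)| * d * max |1 + ‖v‖| |1 - ‖v‖| ^ (d - 1) :=
          (le_abs_self _).trans (abs_pow_sub_pow_le ..)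
      _ ≤ 2 * ‖v‖ * d * 2 ^ (d - 1) := by
          rw [show (1 + ‖v‖) - (1 - ‖v‖) = 2 * ‖v‖ by ring, abs_of_nonneg (by positivity)]
          gcongr
  calc μ.real (symmDiff (closedBall 0 1) (closedBall v 1))
      ≤ μ.real (closedBall 0 (1 + ‖v‖) \ ball 0 (1 - ‖v‖)) :=
        measureReal_mono hsub
          (measure_ne_top_of_subset Set.sdiff_subset measure_closedBall_lt_top.ne)
    _ = ((1 + ‖v‖) ^ d - (1 - ‖v‖) ^ d) * μ.real (ball 0 1) :=
        addHaar_real_closedBall_sdiff_ball μ 0 (by linarith) (by linarith [norm_nonneg v])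
    _ ≤ 2 * ‖v‖ * d * 2 ^ (d - 1) * μ.real (ball 0 1) := by gcongr
    _ = _ := by ring

theorem one_sub_pow_finrank_mul_le_measureReal_sdiff_smul {s : Set E} (hs : μ s ≠ ⊤)
    {t : ℝ} (ht : 0 ≤ t) :
    (1 - t ^ finrank ℝ E) * μ.real s ≤ μ.real (s \ t • s) := by
  have hts : μ (t • s) = ENNReal.ofReal (t ^ finrank ℝ E) * μ s := addHaar_smul_of_nonneg μ ht s
  have hts_real : μ.real (t • s) = t ^ finrank ℝ E * μ.real s := by
    rw [measureReal_def, hts, ENNReal.toReal_mul, ENNReal.toReal_ofReal (by positivity),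
      measureReal_def]
  have := le_measureReal_sdiff (μ := μ) (s₁ := s) (s₂ := t • s)
    (by rw [hts]; exact ENNReal.mul_ne_top ENNReal.ofReal_ne_top hs)
  rw [hts_real] at this
  linarith

end NormedSpace

section InnerProductSpace

variable {E : Type*} [NormedAddCommGroup E] [InnerProductSpace ℝ E]

def capOpposite (u : E) : Set E := closedBall 0 1 ∩ {x | inner ℝ x u ≤ -(1 / 2)}

theorem closedBall_subset_capOpposite {u : E} (hu : ‖u‖ = 1) :
    closedBall ((-(3 / 4) : ℝ) • u) (1 / 8) ⊆ capOpposite u := by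
  intro x hx
  rw [mem_closedBall, dist_eq_norm] at hx
  have hnorm : ‖x‖ ≤ ‖x - (-(3 / 4) : ℝ) • u‖ + ‖(-(3 / 4) : ℝ) • u‖ := norm_le_norm_sub_add _ _
  have hcenter : ‖(-(3 / 4) : ℝ) • u‖ = 3 / 4 := by rw [norm_smul, hu]; norm_num
  have hinner : inner ℝ (x - (-(3 / 4) : ℝ) • u) u = inner ℝ x u + 3 / 4 := by
    rw [inner_sub_left, real_inner_smul_left, real_inner_self_eq_norm_sq, hu]; ring
  have hcs := real_inner_le_norm (x - (-(3 / 4) : ℝ) • u) u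
  rw [hu] at hcs
  exact ⟨mem_closedBall_zero_iff.2 (by linarith), by simp only [Set.mem_ofPred_eq]; linarith⟩

theorem capOpposite_sdiff_smul_subset {u : E} (hu : ‖u‖ = 1) {ε : ℝ} (hε0 : 0 < ε)
    (hε1 : ε ≤ 1) :
    capOpposite u \ (1 - ε / 4) • capOpposite u ⊆ closedBall 0 1 \ closedBall (ε • u) 1 := by
  set t := 1 - ε / 4 with ht
  have ht0 : 0 < t := by linarith
  rintro x ⟨⟨hxB, hxu⟩, hxt⟩
  rw [mem_closedBall_zero_iff] at hxB
  simp only [Set.mem_ofPred_eq] at hxu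
  -- otherwise `t⁻¹ • x` would still lie in the cap
  have ht_lt : t < ‖x‖ := by
    by_contra! hle
    refine hxt ((Set.mem_smul_set_iff_inv_smul_mem₀ ht0.ne' _ _).2 ⟨?_, ?_⟩)
    · rw [mem_closedBall_zero_iff, norm_smul, Real.norm_of_nonneg (by positivity)]
      exact inv_mul_le_one_of_le₀ hle ht0.le
    · have : 1 ≤ t⁻¹ := one_le_inv₀ ht0 |>.2 (by linarith)
      simp only [Set.mem_ofPred_eq, real_inner_smul_left]
      nlinarith
  refine ⟨mem_closedBall_zero_iff.2 hxB, fun hxv => ?_⟩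
  rw [mem_closedBall, dist_eq_norm] at hxv
  have hsq : ‖x - ε • u‖ ^ 2 = ‖x‖ ^ 2 - 2 * ε * inner ℝ x u + ε ^ 2 := by
    rw [norm_sub_sq_real, real_inner_smul_right, norm_smul, hu, Real.norm_of_nonneg hε0.le]
    ring
  have : ‖x - ε • u‖ ^ 2 ≤ 1 := by nlinarith [norm_nonneg (x - ε • u)]
  nlinarith [norm_nonneg x]

variable [FiniteDimensional ℝ E] [MeasurableSpace E] [BorelSpace E]
  (μ : Measure E) [μ.IsAddHaarMeasure]

theorem mul_le_measureReal_symmDiff_closedBall {u : E} (hu : ‖u‖ = 1) {ε : ℝ} (hε0 : 0 < ε)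
    (hε1 : ε ≤ 1) :
    μ.real (closedBall (0 : E) (1 / 8)) / 4 * ε ≤
      μ.real (symmDiff (closedBall 0 1) (closedBall (ε • u) 1)) := by
  have : Nontrivial E :=
    nontrivial_of_ne u 0 (norm_ne_zero_iff.1 (by rw [hu]; exact one_ne_zero))
  set t := 1 - ε / 4 with ht
  set D := capOpposite u
  have hD : μ D ≠ ⊤ :=
    measure_ne_top_of_subset Set.inter_subset_left measure_closedBall_lt_top.ne
  have hsymm : μ (symmDiff (closedBall (0 : E) 1) (closedBall (ε • u) 1)) ≠ ⊤ :=
    ((isBounded_closedBall.union isBounded_closedBall).subset symmDiff_le_sup).measure_lt_top.ne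
  have htd : t ^ finrank ℝ E ≤ t := pow_le_of_le_one (by linarith) (by linarith) finrank_pos.ne'
  calc μ.real (closedBall (0 : E) (1 / 8)) / 4 * ε
      = (1 - t) * μ.real (closedBall ((-(3 / 4) : ℝ) • u) (1 / 8)) := by
        rw [addHaar_real_closedBall_center μ ((-(3 / 4) : ℝ) • u), ht]; ring
    _ ≤ (1 - t ^ finrank ℝ E) * μ.real D := by
        gcongr
        · linarith
        · exact closedBall_subset_capOpposite hu
    _ ≤ μ.real (D \ t • D) :=
        one_sub_pow_finrank_mul_le_measureReal_sdiff_smul μ hD (by linarith)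
    _ ≤ μ.real (closedBall 0 1 \ closedBall (ε • u) 1) :=
        measureReal_mono (capOpposite_sdiff_smul_subset hu hε0 hε1)
          (measure_ne_top_of_subset Set.sdiff_subset measure_closedBall_lt_top.ne)
    _ ≤ _ := measureReal_mono (fun x hx => Set.mem_symmDiff.2 (Or.inl hx)) hsymm

end InnerProductSpace

theorem stmt_14_general (n : ℕ) (x₀ : EuclideanSpace ℝ (Fin n)) (hx₀ : ‖x₀‖ = 1) :
    ∃ c C : ℝ, 0 < c ∧ 0 < C ∧
      ∀ ε : ℝ, 0 < ε → ε < 1 →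
        c * ε ≤ (volume (symmDiff (Metric.closedBall (0 : EuclideanSpace ℝ (Fin n)) 1)
            ((ε • x₀) +ᵥ Metric.closedBall (0 : EuclideanSpace ℝ (Fin n)) 1))).toReal ∧
          (volume (symmDiff (Metric.closedBall (0 : EuclideanSpace ℝ (Fin n)) 1)
            ((ε • x₀) +ᵥ Metric.closedBall (0 : EuclideanSpace ℝ (Fin n)) 1))).toReal ≤ C * ε := by
  have : Nontrivial (EuclideanSpace ℝ (Fin n)) :=
    nontrivial_of_ne x₀ 0 (norm_ne_zero_iff.1 (by rw [hx₀]; exact one_ne_zero))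
  have hn : 0 < n := by simpa using (finrank_pos : 0 < finrank ℝ (EuclideanSpace ℝ (Fin n)))
  have hB₀ : 0 < volume.real (closedBall (0 : EuclideanSpace ℝ (Fin n)) (1 / 8)) :=
    ENNReal.toReal_pos (measure_closedBall_pos _ _ (by norm_num)).ne'
      measure_closedBall_lt_top.ne
  have hB : 0 < volume.real (ball (0 : EuclideanSpace ℝ (Fin n)) 1) :=
    ENNReal.toReal_pos (measure_ball_pos _ _ one_pos).ne' measure_ball_lt_top.ne
  refine ⟨volume.real (closedBall (0 : EuclideanSpace ℝ (Fin n)) (1 / 8)) / 4,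
    2 * n * 2 ^ (n - 1) * volume.real (ball (0 : EuclideanSpace ℝ (Fin n)) 1),
    by positivity, by positivity, fun ε hε0 hε1 => ?_⟩
  have hv : ‖ε • x₀‖ = ε := by rw [norm_smul, hx₀, mul_one, Real.norm_of_nonneg hε0.le]
  simp only [vadd_closedBall_zero, ← measureReal_def]
  refine ⟨mul_le_measureReal_symmDiff_closedBall volume hx₀ hε0 hε1.le, ?_⟩
  simpa [hv, finrank_euclideanSpace_fin] using
    measureReal_symmDiff_closedBall_le volume (hv.trans_lt hε1)

theorem stmt_14 (n : ℕ) (hn : 1 ≤ n) (x₀ : EuclideanSpace ℝ (Fin n)) (hx₀ : ‖x₀‖ = 1) :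
    ∃ c C : ℝ, 0 < c ∧ 0 < C ∧
      ∀ ε : ℝ, 0 < ε → ε < 1 →
        c * ε ≤ (volume (symmDiff (Metric.closedBall (0 : EuclideanSpace ℝ (Fin n)) 1)
            ((ε • x₀) +ᵥ Metric.closedBall (0 : EuclideanSpace ℝ (Fin n)) 1))).toReal ∧
          (volume (symmDiff (Metric.closedBall (0 : EuclideanSpace ℝ (Fin n)) 1)
            ((ε • x₀) +ᵥ Metric.closedBall (0 : EuclideanSpace ℝ (Fin n)) 1))).toReal ≤ C * ε :=
  stmt_14_general n x₀ hx₀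
end
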